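/- arXiv:2406.03537 — 2 statements merged into one kernel-verified Lean document; each statement's English description precedes it below -/
import Mathlib

section
/- Let d be a positive integer and p : ℝ^d → ℝ a continuous probability density with finite second moments (∫ ‖y‖² p(y) dy < ∞). Let x' ∈ ℝ^d with p(x') > 0, and define p_δ(x') = ∫_{ℝ^d} p(x' − y) N^δ_d(y) dy. Then lim_{δ → −∞} (∂/∂δ) log p_δ(x') = 0. -/
open MeasureTheory Real Filter Topology

/-- The density of the Gaussian distribution `N(0, e^{2δ} I_k)` on `ℝ^k`. -/
noncomputable def gaussDens (k : ℕ) (δ : ℝ) (y : EuclideanSpace ℝ (Fin k)) : ℝ :=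
  (2 * π) ^ (-(k : ℝ) / 2) * Real.exp (-(k : ℝ) * δ) *
    Real.exp (-Real.exp (-2 * δ) * ‖y‖ ^ 2 / 2)

/-!
With `c = e^{-δ}` the kernel is a rescaled peak function, `N^δ_d(y) = c^d N^0_d(c y)`, so
`p_δ(x') → p(x')` as `δ → -∞`. Differentiating under the integral sign,
`∂_δ p_δ(x') = e^{-2δ} ∫ ‖y‖² p(x' - y) N^δ_d(y) dy - d p_δ(x')`, and the first term is again an
integral against a rescaled peak function, `‖z‖² N^0_d(z) / d`, which has mass one because the
second moment of `N^0_d` is `d`. Hence it tends to `d p(x')`, and the logarithmic derivative tends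
to `(d p(x') - d p(x')) / p(x') = 0`.
-/

open Set Module Bornology

theorem integral_pow_add_two_mul_exp_neg_mul_sq {b : ℝ} (hb : 0 < b) (n : ℕ) :
    ∫ x in Ioi (0 : ℝ), x ^ (n + 2) * exp (-b * x ^ 2) =
      (n + 1) / (2 * b) * ∫ x in Ioi (0 : ℝ), x ^ n * exp (-b * x ^ 2) := by
  have key (m : ℕ) := integral_rpow_mul_exp_neg_mul_rpow (p := 2) (q := m) two_pos
    (by linarith [m.cast_nonneg (α := ℝ)]) hb
  simp only [rpow_natCast, rpow_two] at key
  rw [key, key, Nat.cast_add, Nat.cast_two,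
    show ((n : ℝ) + 2 + 1) / 2 = (n + 1) / 2 + 1 by ring, Gamma_add_one (by positivity),
    show -((n : ℝ) + 2 + 1) / 2 = -(n + 1) / 2 + -1 by ring, rpow_add hb, rpow_neg_one]
  field_simp

theorem MeasureTheory.Integrable.norm_sq_mul_comp_sub_left {G : Type*} [NormedAddCommGroup G]
    [MeasurableSpace G] [BorelSpace G] {μ : Measure G} [μ.IsAddLeftInvariant] [μ.IsNegInvariant]
    {f : G → ℝ} (hf : Integrable f μ) (hf₂ : Integrable (fun y => ‖y‖ ^ 2 * f y) μ) (x : G) :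
    Integrable (fun y => ‖y‖ ^ 2 * f (x - y)) μ := by
  refine ((hf.comp_sub_left x).const_mul (2 * ‖x‖ ^ 2)).norm.add
    ((hf₂.comp_sub_left x).const_mul 2).norm |>.mono'
    (continuous_norm.pow 2 |>.aestronglyMeasurable.mul (hf.comp_sub_left x).aestronglyMeasurable)
    (Eventually.of_forall fun y => ?_)
  have : ‖y‖ ^ 2 ≤ 2 * ‖x‖ ^ 2 + 2 * ‖x - y‖ ^ 2 := by
    have := sub_sub_cancel x y ▸ norm_sub_le x (x - y)
    nlinarith [norm_nonneg y, sq_nonneg (‖x‖ - ‖x - y‖)]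
  simp only [norm_mul, norm_pow, norm_norm, Real.norm_ofNat, Pi.add_apply]
  nlinarith [norm_nonneg (f (x - y))]

section NormedSpace

variable {F : Type*} [NormedAddCommGroup F] [NormedSpace ℝ F] [FiniteDimensional ℝ F]
  [MeasurableSpace F] [BorelSpace F] {μ : Measure F} [μ.IsAddHaarMeasure]

theorem integral_norm_sq_mul_exp_neg_mul_sq_norm {b : ℝ} (hb : 0 < b) :
    ∫ x, ‖x‖ ^ 2 * exp (-b * ‖x‖ ^ 2) ∂μ =
      finrank ℝ F / (2 * b) * ∫ x, exp (-b * ‖x‖ ^ 2) ∂μ := by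
  cases subsingleton_or_nontrivial F with
  | inl _ =>
    have (x : F) : ‖x‖ = 0 := by simp [Subsingleton.elim x 0]
    simp [this, finrank_zero_of_subsingleton]
  | inr _ =>
    rw [integral_fun_norm_addHaar μ (fun r => r ^ 2 * exp (-b * r ^ 2)),
      integral_fun_norm_addHaar μ (fun r => exp (-b * r ^ 2))]
    simp only [smul_eq_mul, nsmul_eq_mul, ← mul_assoc, ← pow_add]
    rw [integral_pow_add_two_mul_exp_neg_mul_sq hb, Nat.cast_sub finrank_pos, Nat.cast_one,
      sub_add_cancel]
    ring

theorem tendsto_integral_mul_rescale_atBot {φ : F → ℝ} (hφ : ∀ x, 0 ≤ φ x)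
    (h'φ : ∫ x, φ x ∂μ = 1) (h : Tendsto (fun x ↦ ‖x‖ ^ finrank ℝ F * φ x) (cobounded F) (𝓝 0))
    {g : F → ℝ} (hg : Integrable g μ) (h'g : ContinuousAt g 0) :
    Tendsto (fun δ : ℝ ↦ ∫ x, g x * (exp (-δ) ^ finrank ℝ F * φ (exp (-δ) • x)) ∂μ) atBot
      (𝓝 (g 0)) := by
  simpa [Function.comp_def, mul_comm] using
    (tendsto_integral_comp_smul_smul_of_integrable hφ h'φ h hg h'g).comp
      (tendsto_exp_atTop.comp tendsto_neg_atBot_atTop)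

end NormedSpace

section gaussDens

variable {k : ℕ}

theorem gaussDens_eq_mul_exp_neg_mul_sq_norm (δ : ℝ) (y : EuclideanSpace ℝ (Fin k)) :
    gaussDens k δ y =
      (2 * π) ^ (-(k : ℝ) / 2) * exp (-(k : ℝ) * δ) * exp (-(exp (-2 * δ) / 2) * ‖y‖ ^ 2) := by
  rw [gaussDens]; ring_nf

theorem gaussDens_pos (δ : ℝ) (y : EuclideanSpace ℝ (Fin k)) : 0 < gaussDens k δ y := by
  rw [gaussDens]; positivity

@[fun_prop]
theorem continuous_gaussDens (δ : ℝ) : Continuous (gaussDens k δ) := by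
  unfold gaussDens; fun_prop

theorem gaussDens_le (δ : ℝ) (y : EuclideanSpace ℝ (Fin k)) :
    gaussDens k δ y ≤ (2 * π) ^ (-(k : ℝ) / 2) * exp (-(k : ℝ) * δ) := by
  rw [gaussDens_eq_mul_exp_neg_mul_sq_norm]
  refine mul_le_of_le_one_right (by positivity) (exp_le_one_iff.2 ?_)
  have : 0 ≤ exp (-2 * δ) / 2 * ‖y‖ ^ 2 := by positivity
  linarith

theorem gaussDens_eq_rescale (δ : ℝ) (y : EuclideanSpace ℝ (Fin k)) :
    gaussDens k δ y = exp (-δ) ^ k * gaussDens k 0 (exp (-δ) • y) := by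
  simp only [gaussDens, norm_smul, norm_of_nonneg (exp_pos _).le, mul_pow, ← exp_nat_mul,
    mul_zero, exp_zero, mul_one]
  push_cast
  ring_nf

theorem hasDerivAt_gaussDens (δ : ℝ) (y : EuclideanSpace ℝ (Fin k)) :
    HasDerivAt (gaussDens k · y) ((exp (-2 * δ) * ‖y‖ ^ 2 - k) * gaussDens k δ y) δ := by
  have h := (((hasDerivAt_id δ).const_mul (-(k : ℝ))).exp.mul
    (((hasDerivAt_id δ).const_mul (-2)).exp.mul_const (-‖y‖ ^ 2 / 2)).exp).const_mul
    ((2 * π) ^ (-(k : ℝ) / 2))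
  have hfun : (gaussDens k · y) =
      fun t => (2 * π) ^ (-(k : ℝ) / 2) *
        (exp (-k * t) * exp (exp (-2 * t) * (-‖y‖ ^ 2 / 2))) := by
    ext t; rw [gaussDens]; ring_nf
  rw [hfun]
  refine h.congr_deriv ?_
  simp only [gaussDens, id]
  ring_nf

theorem integral_gaussDens (δ : ℝ) : ∫ y, gaussDens k δ y = 1 := by
  simp only [gaussDens_eq_mul_exp_neg_mul_sq_norm]
  rw [integral_const_mul, GaussianFourier.integral_rexp_neg_mul_sq_norm (by positivity),
    finrank_euclideanSpace_fin, show π / (exp (-2 * δ) / 2) = 2 * π * exp (2 * δ) by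
      rw [show -2 * δ = -(2 * δ) by ring, exp_neg]; field_simp,
    mul_rpow (by positivity) (exp_pos _).le, ← exp_mul, neg_div, rpow_neg (by positivity),
    mul_right_comm, ← mul_assoc, inv_mul_cancel₀ (by positivity), one_mul, ← exp_add]
  ring_nf
  simp

theorem integral_norm_sq_mul_gaussDens (δ : ℝ) :
    ∫ y, ‖y‖ ^ 2 * gaussDens k δ y = k * exp (2 * δ) := by
  have h := integral_gaussDens (k := k) δ
  simp only [gaussDens_eq_mul_exp_neg_mul_sq_norm, mul_left_comm (‖_‖ ^ 2)] at h ⊢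
  rw [integral_const_mul, integral_norm_sq_mul_exp_neg_mul_sq_norm (by positivity),
    finrank_euclideanSpace_fin, mul_left_comm, ← integral_const_mul, h,
    show -2 * δ = -(2 * δ) by ring, exp_neg]
  field_simp

theorem tendsto_norm_pow_mul_gaussDens (δ : ℝ) (n : ℕ) :
    Tendsto (fun y => ‖y‖ ^ n * gaussDens k δ y) (cobounded _) (𝓝 0) := by
  have h := (rpow_mul_exp_neg_mul_sq_isLittleO_exp_neg (b := exp (-2 * δ) / 2) (by positivity)
    n).tendsto_zero_of_tendsto (tendsto_exp_atBot.comp <|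
      tendsto_id.const_mul_atTop_of_neg (neg_lt_zero.mpr one_half_pos))
  simpa [gaussDens_eq_mul_exp_neg_mul_sq_norm, mul_left_comm (‖_‖ ^ n)] using
    (h.comp tendsto_norm_cobounded_atTop).const_mul ((2 * π) ^ (-(k : ℝ) / 2) * exp (-k * δ))

theorem tendsto_integral_mul_gaussDens {g : EuclideanSpace ℝ (Fin k) → ℝ} (hg : Integrable g)
    (h'g : ContinuousAt g 0) :
    Tendsto (fun δ => ∫ y, g y * gaussDens k δ y) atBot (𝓝 (g 0)) := by
  have h := tendsto_integral_mul_rescale_atBot (fun y => (gaussDens_pos 0 y).le)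
    (integral_gaussDens 0) (by simpa using tendsto_norm_pow_mul_gaussDens (k := k) 0 k) hg h'g
  simpa only [finrank_euclideanSpace_fin, ← gaussDens_eq_rescale] using h

theorem tendsto_integral_norm_sq_mul_gaussDens {g : EuclideanSpace ℝ (Fin k) → ℝ}
    (hg : Integrable g) (h'g : ContinuousAt g 0) :
    Tendsto (fun δ => exp (-2 * δ) * ∫ y, ‖y‖ ^ 2 * g y * gaussDens k δ y) atBot
      (𝓝 (k * g 0)) := by
  rcases eq_or_ne k 0 with rfl | hk
  · have (y : EuclideanSpace ℝ (Fin 0)) : ‖y‖ = 0 := by simp [Subsingleton.elim y 0]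
    simp [this]
  have h := tendsto_integral_mul_rescale_atBot (φ := fun z => ‖z‖ ^ 2 * gaussDens k 0 z / k)
    (fun z => by have := gaussDens_pos 0 z; positivity)
    (by rw [integral_div, integral_norm_sq_mul_gaussDens]; simp [hk])
    (by simpa [finrank_euclideanSpace_fin, mul_div_assoc', ← mul_assoc, ← pow_add] using
      (tendsto_norm_pow_mul_gaussDens (k := k) 0 (k + 2)).div_const k) hg h'g
  refine (h.const_mul (k : ℝ)).congr fun δ => ?_
  rw [← integral_const_mul, ← integral_const_mul]
  congr 1 with y
  rw [finrank_euclideanSpace_fin, gaussDens_eq_rescale δ y, norm_smul,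
    norm_of_nonneg (exp_pos _).le, mul_pow]
  field_simp
  rw [← exp_nat_mul]
  ring_nf

theorem hasDerivAt_integral_mul_gaussDens {f : EuclideanSpace ℝ (Fin k) → ℝ} (hf : Integrable f)
    (hf₂ : Integrable fun y => ‖y‖ ^ 2 * f y) (δ₀ : ℝ) :
    HasDerivAt (fun δ => ∫ y, f y * gaussDens k δ y)
      (exp (-2 * δ₀) * (∫ y, ‖y‖ ^ 2 * f y * gaussDens k δ₀ y) -
        k * ∫ y, f y * gaussDens k δ₀ y) δ₀ := by
  have hmul_dens {g : EuclideanSpace ℝ (Fin k) → ℝ} (hg : Integrable g) (δ : ℝ) :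
      Integrable fun y => g y * gaussDens k δ y :=
    hg.mul_bdd (continuous_gaussDens δ).aestronglyMeasurable <| Eventually.of_forall fun y => by
      rw [norm_of_nonneg (gaussDens_pos δ y).le]; exact gaussDens_le δ y
  set M := (2 * π) ^ (-(k : ℝ) / 2) * exp (-(k : ℝ) * (δ₀ - 1))
  have hbound (y) (δ) (hδ : δ ∈ Metric.ball δ₀ 1) :
      ‖f y * ((exp (-2 * δ) * ‖y‖ ^ 2 - k) * gaussDens k δ y)‖ ≤
        M * (exp (-2 * (δ₀ - 1)) * ‖‖y‖ ^ 2 * f y‖ + k * ‖f y‖) := by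
    have hδ' := (abs_lt.1 (Real.dist_eq δ δ₀ ▸ Metric.mem_ball.1 hδ)).1
    have hexp : exp (-2 * δ) ≤ exp (-2 * (δ₀ - 1)) := exp_le_exp.2 (by linarith)
    have hfac : ‖exp (-2 * δ) * ‖y‖ ^ 2 - k‖ ≤ exp (-2 * (δ₀ - 1)) * ‖y‖ ^ 2 + k := by
      rw [Real.norm_eq_abs, abs_le]
      constructor <;> nlinarith [exp_pos (-2 * δ), sq_nonneg ‖y‖, k.cast_nonneg (α := ℝ)]
    have hdens : gaussDens k δ y ≤ M := (gaussDens_le δ y).trans <|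
      mul_le_mul_of_nonneg_left (exp_le_exp.2 (by nlinarith [k.cast_nonneg (α := ℝ)]))
        (by positivity)
    have hpos := gaussDens_pos δ y
    rw [norm_mul, norm_mul, norm_mul, norm_pow, norm_norm, norm_of_nonneg hpos.le]
    calc ‖f y‖ * (‖exp (-2 * δ) * ‖y‖ ^ 2 - k‖ * gaussDens k δ y)
        ≤ ‖f y‖ * ((exp (-2 * (δ₀ - 1)) * ‖y‖ ^ 2 + k) * M) := by gcongr
      _ = _ := by ring
  obtain ⟨-, h⟩ := hasDerivAt_integral_of_dominated_loc_of_deriv_le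
    (Metric.ball_mem_nhds δ₀ one_pos)
    (Eventually.of_forall fun δ => (hmul_dens hf δ).aestronglyMeasurable) (hmul_dens hf δ₀)
    (hf.aestronglyMeasurable.mul (by fun_prop : Continuous fun y =>
      (exp (-2 * δ₀) * ‖y‖ ^ 2 - k) * gaussDens k δ₀ y).aestronglyMeasurable)
    (Eventually.of_forall hbound)
    (((hf₂.norm.const_mul _).add (hf.norm.const_mul _)).const_mul M)
    (Eventually.of_forall fun y δ _ => (hasDerivAt_gaussDens δ y).const_mul (f y))
  refine h.congr_deriv ?_
  rw [← integral_const_mul, ← integral_const_mul,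
    ← integral_sub ((hmul_dens hf₂ δ₀).const_mul _) ((hmul_dens hf δ₀).const_mul _)]
  congr 1 with y
  ring

end gaussDens

theorem deriv_log_smoothed_density_tendsto_zero_general
    (d : ℕ)
    (p : EuclideanSpace ℝ (Fin d) → ℝ)
    (hp_cont : Continuous p)
    (hp_prob : ∫ y, p y = 1)
    (hp_mom2 : Integrable fun y => ‖y‖ ^ 2 * p y)
    (x' : EuclideanSpace ℝ (Fin d)) (hx' : 0 < p x')
    (pδ : ℝ → ℝ)
    (hpδ : ∀ δ, pδ δ = ∫ y, p (x' - y) * gaussDens d δ y) :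
    Tendsto (fun δ => deriv (fun δ' => Real.log (pδ δ')) δ) atBot (𝓝 0) := by
  have hp_int : Integrable p := integrable_of_integral_eq_one hp_prob
  have hq_int : Integrable fun y => p (x' - y) := hp_int.comp_sub_left x'
  have hq_cont : ContinuousAt (fun y => p (x' - y)) 0 := by fun_prop
  rw [show pδ = _ from funext hpδ]
  have hlim := tendsto_integral_mul_gaussDens hq_int hq_cont
  have hlim₂ := tendsto_integral_norm_sq_mul_gaussDens hq_int hq_cont
  simp only [sub_zero] at hlim hlim₂
  have hderiv :=
    hasDerivAt_integral_mul_gaussDens hq_int (hp_int.norm_sq_mul_comp_sub_left hp_mom2 x')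
  have hquot := (hlim₂.sub (hlim.const_mul (d : ℝ))).div hlim hx'.ne'
  rw [sub_self, zero_div] at hquot
  refine hquot.congr' ?_
  filter_upwards [hlim.eventually_ne hx'.ne'] with δ hδ
  exact ((hderiv δ).log hδ).deriv.symm

/-- Central claim of the proof of Theorem 1: the Gaussian-smoothed density
`p_δ(x') = (p ∗ N^δ_d)(x')` of a continuous probability density with finite second
moments satisfies `lim_{δ → −∞} (∂/∂δ) log p_δ(x') = 0` at any `x'` with `p(x') > 0`. -/
theorem deriv_log_smoothed_density_tendsto_zero
    (d : ℕ) (hd : 0 < d)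
    (p : EuclideanSpace ℝ (Fin d) → ℝ)
    (hp_cont : Continuous p)
    (hp_nonneg : ∀ y, 0 ≤ p y)
    (hp_prob : ∫ y, p y = 1)
    (hp_mom2 : Integrable fun y => ‖y‖ ^ 2 * p y)
    (x' : EuclideanSpace ℝ (Fin d)) (hx' : 0 < p x')
    (pδ : ℝ → ℝ)
    (hpδ : ∀ δ, pδ δ = ∫ y, p (x' - y) * gaussDens d δ y) :
    Tendsto (fun δ => deriv (fun δ' => Real.log (pδ δ')) δ) atBot (𝓝 0) :=
  deriv_log_smoothed_density_tendsto_zero_general d p hp_cont hp_prob hp_mom2 x' hx' pδ hpδ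
end

section
/- Let D be a positive integer, and let p : ℝ^D × (0,1] → ℝ be smooth and positive, satisfying the Fokker–Planck equation (∂/∂t) p(x,t) = −p(x,t)(∇·f(x,t)) − ⟨f(x,t), ∇p(x,t)⟩ + (1/2) g²(t) tr(∇²p(x,t)) with drift f(x,t) = b(t)x, where b, g : [0,1] → ℝ are continuous. Let ψ, σ : (0,1] → (0,∞) be differentiable with ψ'(t) = b(t)ψ(t) and (σ²)'(t) = 2b(t)σ²(t) + g²(t), let λ(t) = σ(t)/ψ(t) be injective with λ'(t) ≠ 0, and define t(δ) = λ^{−1}(e^δ) and ϱ(x, δ) = ψ(t(δ))^D · p(ψ(t(δ)) x, t(δ)). Then with s(x,t) = ∇ log p(x,t), for all x and all admissible δ: (∂/∂δ) log ϱ(x, δ) = σ²(t(δ)) · ( tr(∇s(ψ(t(δ))x, t(δ))) + ‖s(ψ(t(δ))x, t(δ))‖² ). -/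
open MeasureTheory Real Filter Topology
open scoped RealInnerProductSpace

lemma trace_smulRight_aux {D : ℕ} (φ : EuclideanSpace ℝ (Fin D) →L[ℝ] ℝ)
    (v : EuclideanSpace ℝ (Fin D)) :
    LinearMap.trace ℝ (EuclideanSpace ℝ (Fin D)) (φ.smulRight v).toLinearMap = φ v := by
  classical
  set b := (EuclideanSpace.basisFun (Fin D) ℝ).toBasis
  rw [LinearMap.trace_eq_matrix_trace ℝ b]
  have hv : φ v = ∑ i, b.repr v i * φ (b i) := by
    conv_lhs => rw [← b.sum_repr v]
    rw [map_sum]; simp [mul_comm]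
  rw [hv, Matrix.trace]
  congr 1; ext i
  simp [Matrix.diag, LinearMap.toMatrix_apply, b, mul_comm]

set_option maxHeartbeats 2000000 in
/-- Equation (13), the rate-of-change formula underlying FLIPD: for a smooth positive `p`
satisfying the Fokker–Planck equation with linear drift `f(x,t) = b(t)x`, mean/std
functions `ψ, σ` satisfying `ψ' = bψ` and `(σ²)' = 2bσ² + g²`, injective
`λ = σ/ψ` with `λ' ≠ 0`, time reparametrization `t(δ) = λ⁻¹(e^δ)`, and
`ϱ(x, δ) = ψ(t(δ))^D p(ψ(t(δ))x, t(δ))`, one has for every `x` and admissible `δ`: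
`(∂/∂δ) log ϱ(x,δ) = σ²(t(δ)) (tr(∇s(ψ(t(δ))x, t(δ))) + ‖s(ψ(t(δ))x, t(δ))‖²)`,
where `s = ∇ log p` is the score. -/
theorem flipd_rate_of_change_formula
    (D : ℕ) (hD : 0 < D)
    (p : EuclideanSpace ℝ (Fin D) → ℝ → ℝ)
    (hp_smooth : ContDiff ℝ (⊤ : ℕ∞) (fun q : EuclideanSpace ℝ (Fin D) × ℝ => p q.1 q.2))
    (hp_pos : ∀ (x : EuclideanSpace ℝ (Fin D)), ∀ t ∈ Set.Ioc (0 : ℝ) 1, 0 < p x t)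
    (b g : ℝ → ℝ)
    (hb_cont : ContinuousOn b (Set.Icc (0 : ℝ) 1))
    (hg_cont : ContinuousOn g (Set.Icc (0 : ℝ) 1))
    (f : EuclideanSpace ℝ (Fin D) → ℝ → EuclideanSpace ℝ (Fin D))
    (hf : ∀ x t, f x t = b t • x)
    (hFP : ∀ (x : EuclideanSpace ℝ (Fin D)), ∀ t ∈ Set.Ioc (0 : ℝ) 1,
      deriv (fun τ => p x τ) t =
        -(p x t) *
            LinearMap.trace ℝ (EuclideanSpace ℝ (Fin D))
              (fderiv ℝ (fun y => f y t) x).toLinearMap -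
          ⟪f x t, gradient (fun y => p y t) x⟫ +
          (1 / 2) * g t ^ 2 *
            LinearMap.trace ℝ (EuclideanSpace ℝ (Fin D))
              (fderiv ℝ (gradient (fun y => p y t)) x).toLinearMap)
    (ψ σ : ℝ → ℝ)
    (hψ_pos : ∀ t ∈ Set.Ioc (0 : ℝ) 1, 0 < ψ t)
    (hσ_pos : ∀ t ∈ Set.Ioc (0 : ℝ) 1, 0 < σ t)
    (hψ_diff : ∀ t ∈ Set.Ioc (0 : ℝ) 1, DifferentiableAt ℝ ψ t)
    (hσ_diff : ∀ t ∈ Set.Ioc (0 : ℝ) 1, DifferentiableAt ℝ σ t)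
    (hψ' : ∀ t ∈ Set.Ioc (0 : ℝ) 1, deriv ψ t = b t * ψ t)
    (hσ2' : ∀ t ∈ Set.Ioc (0 : ℝ) 1,
      deriv (fun u => σ u ^ 2) t = 2 * b t * σ t ^ 2 + g t ^ 2)
    (lam : ℝ → ℝ) (hlam : ∀ t, lam t = σ t / ψ t)
    (hlam_inj : Set.InjOn lam (Set.Ioc (0 : ℝ) 1))
    (hlam_deriv_ne : ∀ t ∈ Set.Ioc (0 : ℝ) 1, deriv lam t ≠ 0)
    (tfun : ℝ → ℝ)
    (htfun : ∀ δ : ℝ, Real.exp δ ∈ lam '' Set.Ioc (0 : ℝ) 1 →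
      tfun δ ∈ Set.Ioc (0 : ℝ) 1 ∧ lam (tfun δ) = Real.exp δ)
    (htfun_diff : ∀ δ : ℝ, Real.exp δ ∈ lam '' Set.Ioc (0 : ℝ) 1 →
      DifferentiableAt ℝ tfun δ)
    (s : EuclideanSpace ℝ (Fin D) → ℝ → EuclideanSpace ℝ (Fin D))
    (hs : ∀ x t, s x t = gradient (fun y => Real.log (p y t)) x)
    (ϱ : EuclideanSpace ℝ (Fin D) → ℝ → ℝ)
    (hϱ : ∀ x δ, ϱ x δ = ψ (tfun δ) ^ D * p (ψ (tfun δ) • x) (tfun δ)) :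
    ∀ (x : EuclideanSpace ℝ (Fin D)) (δ : ℝ),
      Real.exp δ ∈ lam '' Set.Ioc (0 : ℝ) 1 →
      deriv (fun δ' => Real.log (ϱ x δ')) δ =
        σ (tfun δ) ^ 2 *
          (LinearMap.trace ℝ (EuclideanSpace ℝ (Fin D))
              (fderiv ℝ (fun y => s y (tfun δ)) (ψ (tfun δ) • x)).toLinearMap +
            ‖s (ψ (tfun δ) • x) (tfun δ)‖ ^ 2) := by
  classical
  intro x δ hδ
  obtain ⟨htI, hlamt⟩ := htfun δ hδ
  set t := tfun δ with htdef
  set y : EuclideanSpace ℝ (Fin D) := ψ t • x with hydef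
  have ht0 : 0 < t := htI.1
  have hψt : 0 < ψ t := hψ_pos t htI
  have hσt : 0 < σ t := hσ_pos t htI
  have hpt : 0 < p y t := hp_pos y t htI
  -- differentiability of lam and derivative computation
  have hσ't : deriv σ t = b t * σ t + g t ^ 2 / (2 * σ t) := by
    have h2 : deriv (fun u => σ u ^ 2) t = 2 * σ t * deriv σ t := by
      have := ((hσ_diff t htI).hasDerivAt.pow 2).deriv
      simpa [mul_comm, mul_assoc] using (show deriv (fun u => σ u ^ 2) t = _ from this)
    have h3 := hσ2' t htI
    rw [h2] at h3
    field_simp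
    linarith
  have hlam_fun : lam = fun u => σ u / ψ u := funext hlam
  have hlam_hasDeriv : HasDerivAt lam
      ((deriv σ t * ψ t - σ t * deriv ψ t) / ψ t ^ 2) t := by
    rw [hlam_fun]
    exact (hσ_diff t htI).hasDerivAt.div (hψ_diff t htI).hasDerivAt hψt.ne'
  have hlamd : deriv lam t = g t ^ 2 / (2 * σ t * ψ t) := by
    rw [hlam_hasDeriv.deriv, hσ't, hψ' t htI]
    field_simp
    ring
  have hg_ne : g t ≠ 0 := by
    intro h
    exact hlam_deriv_ne t htI (by rw [hlamd, h]; simp)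
  -- pinning the derivative of tfun
  have hdt : DifferentiableAt ℝ tfun δ := htfun_diff δ hδ
  set m := deriv tfun δ with hmdef
  have hlam_cont : ContinuousOn lam (Set.Ioc (0:ℝ) 1) := fun u hu => by
    rw [hlam_fun]
    exact (((hσ_diff u hu).div (hψ_diff u hu)
      (hψ_pos u hu).ne').continuousAt).continuousWithinAt
  have hlam_pos : ∀ u ∈ Set.Ioc (0:ℝ) 1, 0 < lam u := fun u hu => by
    rw [hlam]; exact div_pos (hσ_pos u hu) (hψ_pos u hu)
  have hpin : deriv lam t * m = Real.exp δ := by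
    set S : Set ℝ := Real.exp ⁻¹' (lam '' Set.Ioc (0 : ℝ) 1) with hS
    have hδS : δ ∈ S := hδ
    have hJ : (lam '' Set.Ioc (0:ℝ) 1).OrdConnected :=
      (isPreconnected_Ioc.image lam hlam_cont).ordConnected
    have hSord : S.OrdConnected := by
      constructor
      intro a ha c hc z hz
      exact hJ.out ha hc ⟨Real.exp_le_exp.2 hz.1, Real.exp_le_exp.2 hz.2⟩
    have hconv : Convex ℝ S := hSord.convex
    have hne : (interior S).Nonempty := by
      have h1 : (1:ℝ) ∈ Set.Ioc (0:ℝ) 1 := by norm_num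
      have h2 : (1/2:ℝ) ∈ Set.Ioc (0:ℝ) 1 := by norm_num
      have hmem1 : Real.log (lam 1) ∈ S := by
        simp only [hS, Set.mem_preimage, Real.exp_log (hlam_pos 1 h1)]
        exact ⟨1, h1, rfl⟩
      have hmem2 : Real.log (lam (1/2)) ∈ S := by
        simp only [hS, Set.mem_preimage, Real.exp_log (hlam_pos _ h2)]
        exact ⟨1/2, h2, rfl⟩
      have hne' : Real.log (lam 1) ≠ Real.log (lam (1/2)) := by
        intro h
        have := Real.exp_log (hlam_pos 1 h1) ▸ Real.exp_log (hlam_pos _ h2) ▸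
          congrArg Real.exp h
        exact (by norm_num : (1:ℝ) ≠ 1/2) (hlam_inj h1 h2 this)
      set a := min (Real.log (lam 1)) (Real.log (lam (1/2)))
      set c := max (Real.log (lam 1)) (Real.log (lam (1/2)))
      have hac : a < c := by
        rcases hne'.lt_or_gt with h | h
        · simpa [a, c, min_eq_left h.le, max_eq_right h.le] using h
        · simpa [a, c, min_eq_right h.le, max_eq_left h.le] using h
      have hIcc : Set.Icc a c ⊆ S := by
        rcases le_total (Real.log (lam 1)) (Real.log (lam (1/2))) with h | h
        · simpa [a, c, min_eq_left h, max_eq_right h] using hSord.out hmem1 hmem2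
        · simpa [a, c, min_eq_right h, max_eq_left h] using hSord.out hmem2 hmem1
      exact ⟨(a+c)/2, interior_mono hIcc (by rw [interior_Icc]; constructor <;> linarith)⟩
    have hU : UniqueDiffWithinAt ℝ S δ :=
      uniqueDiffWithinAt_convex hconv hne (subset_closure hδS)
    have h1 : HasDerivWithinAt (fun δ' => lam (tfun δ')) (deriv lam t * m) S δ :=
      ((hlam_hasDeriv.deriv ▸ hlam_hasDeriv).comp δ hdt.hasDerivAt).hasDerivWithinAt
    have h2 : HasDerivWithinAt (fun δ' => lam (tfun δ')) (Real.exp δ) S δ :=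
      (Real.hasDerivAt_exp δ).hasDerivWithinAt.congr (fun z hz => (htfun z hz).2) hlamt
    exact hU.eq_deriv _ h1 h2 ▸ rfl
  have hm2 : m = 2 * σ t ^ 2 / g t ^ 2 := by
    have h := hpin
    rw [hlamd, ← hlamt, hlam] at h
    field_simp at h ⊢
    nlinarith [h]
  -- calculus facts for p
  have hp2_diff : Differentiable ℝ (fun q : EuclideanSpace ℝ (Fin D) × ℝ => p q.1 q.2) :=
    hp_smooth.differentiable (by simp)
  set P := fderiv ℝ (fun q : EuclideanSpace ℝ (Fin D) × ℝ => p q.1 q.2) (y, t) with hPdef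
  have hP : HasFDerivAt (fun q : EuclideanSpace ℝ (Fin D) × ℝ => p q.1 q.2) P (y, t) :=
    (hp2_diff (y, t)).hasFDerivAt
  have hq_smooth : ContDiff ℝ (⊤ : ℕ∞) (fun z : EuclideanSpace ℝ (Fin D) => p z t) :=
    hp_smooth.comp (contDiff_id.prodMk contDiff_const)
  have hq_diff : Differentiable ℝ (fun z : EuclideanSpace ℝ (Fin D) => p z t) :=
    hq_smooth.differentiable (by simp)
  have hx_part : HasFDerivAt (fun z : EuclideanSpace ℝ (Fin D) => p z t)
      (P.comp ((ContinuousLinearMap.id ℝ (EuclideanSpace ℝ (Fin D))).prod 0)) y :=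
    HasFDerivAt.comp (f := fun z : EuclideanSpace ℝ (Fin D) => (z, t)) y hP
      ((hasFDerivAt_id y).prodMk (hasFDerivAt_const t y))
  set G : EuclideanSpace ℝ (Fin D) → EuclideanSpace ℝ (Fin D) :=
    gradient (fun z : EuclideanSpace ℝ (Fin D) => p z t) with hGdef
  have hG_eq : G = fun z => (InnerProductSpace.toDual ℝ (EuclideanSpace ℝ (Fin D))).symm
      (fderiv ℝ (fun z : EuclideanSpace ℝ (Fin D) => p z t) z) := rfl
  have hGpair : ∀ z v : EuclideanSpace ℝ (Fin D),
      ⟪G z, v⟫ = fderiv ℝ (fun z : EuclideanSpace ℝ (Fin D) => p z t) z v := by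
    intro z v
    rw [hG_eq, InnerProductSpace.toDual_symm_apply]
  have hGy : ∀ v : EuclideanSpace ℝ (Fin D), ⟪G y, v⟫ = P (v, 0) := by
    intro v
    rw [hGpair, hx_part.fderiv]
    rfl
  have ht_part : HasDerivAt (fun τ => p y τ) (P ((0 : EuclideanSpace ℝ (Fin D)), 1)) t :=
    hP.comp_hasDerivAt t ((hasDerivAt_const t y).prodMk (hasDerivAt_id t))
  -- numbers
  set pt := p y t with hptdef
  set Tr2 := LinearMap.trace ℝ (EuclideanSpace ℝ (Fin D))
    (fderiv ℝ (gradient (fun z : EuclideanSpace ℝ (Fin D) => p z t)) y).toLinearMap with hTr2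
  set I1 : ℝ := ⟪G y, x⟫ with hI1
  -- trace of drift jacobian
  have htrf : LinearMap.trace ℝ (EuclideanSpace ℝ (Fin D))
      (fderiv ℝ (fun z => f z t) y).toLinearMap = b t * D := by
    have hffun : (fun z : EuclideanSpace ℝ (Fin D) => f z t) = fun z => b t • z :=
      funext fun z => hf z t
    have hfd : HasFDerivAt (fun z : EuclideanSpace ℝ (Fin D) => b t • z)
        (b t • ContinuousLinearMap.id ℝ (EuclideanSpace ℝ (Fin D))) y :=
      (hasFDerivAt_id y).const_smul (b t)
    rw [hffun, hfd.fderiv]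
    simp [LinearMap.trace_id]
  -- Fokker-Planck at (y, t) in terms of P
  have hP01 : P ((0 : EuclideanSpace ℝ (Fin D)), 1) =
      -pt * (b t * D) - b t * ψ t * I1 + (1/2) * g t ^ 2 * Tr2 := by
    have h := hFP y t htI
    rw [ht_part.deriv] at h
    rw [h, htrf]
    have h1 : ⟪y, G y⟫ = ψ t * I1 := by
      rw [real_inner_comm, hI1, ← real_inner_smul_right]
    rw [show (gradient (fun z : EuclideanSpace ℝ (Fin D) => p z t) y) = G y from rfl,
      hf, real_inner_smul_left, h1]
    ring
  -- the function F and its derivative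
  set F : ℝ → ℝ := fun τ => ψ τ ^ D * p (ψ τ • x) τ with hFdef
  have h_pc : HasDerivAt (fun τ => p (ψ τ • x) τ) (P (deriv ψ t • x, 1)) t := by
    have hc : HasDerivAt (fun τ => (ψ τ • x, τ) : ℝ → EuclideanSpace ℝ (Fin D) × ℝ)
        (deriv ψ t • x, 1) t :=
      ((hψ_diff t htI).hasDerivAt.smul_const x).prodMk (hasDerivAt_id t)
    exact HasFDerivAt.comp_hasDerivAt (f := fun τ => (ψ τ • x, τ)) t hP hc
  set K : ℝ := (D * ψ t ^ (D - 1) * deriv ψ t) * pt + ψ t ^ D * P (deriv ψ t • x, 1)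
    with hKdef
  have hK : HasDerivAt F K t := by
    rw [hFdef]
    exact ((hψ_diff t htI).hasDerivAt.pow D).mul h_pc
  have hPv1 : P (deriv ψ t • x, 1) = b t * ψ t * I1 + P ((0 : EuclideanSpace ℝ (Fin D)), 1) := by
    have : (deriv ψ t • x, (1:ℝ)) = ((deriv ψ t • x, (0:ℝ)) :
        EuclideanSpace ℝ (Fin D) × ℝ) + ((0 : EuclideanSpace ℝ (Fin D)), (1:ℝ)) := by
      simp
    rw [this, map_add]
    have h0 : P (deriv ψ t • x, 0) = b t * ψ t * I1 := by
      rw [← hGy, real_inner_smul_right, hψ' t htI, hI1]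
      try ring
    rw [h0]
  -- LHS computation
  have hFt_pos : 0 < F t := by
    rw [hFdef]
    exact mul_pos (pow_pos hψt D) hpt
  have hLHS : deriv (fun δ' => Real.log (ϱ x δ')) δ = K * m / F t := by
    have hfun : (fun δ' => Real.log (ϱ x δ')) = fun δ' => Real.log (F (tfun δ')) := by
      funext δ'
      rw [hϱ, hFdef]
    rw [hfun]
    have hlog : HasDerivAt (fun δ' => Real.log (F (tfun δ'))) (K * m / F t) δ :=
      (hK.comp δ hdt.hasDerivAt).log hFt_pos.ne'
    exact hlog.deriv
  -- score function facts
  have hfd_diff : Differentiable ℝ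
      (fderiv ℝ (fun z : EuclideanSpace ℝ (Fin D) => p z t)) :=
    (hq_smooth.fderiv_right (m := (⊤ : ℕ∞)) (by simp)).differentiable (by simp)
  have hG_diff : Differentiable ℝ G := by
    rw [hG_eq]
    exact fun z => ((InnerProductSpace.toDual ℝ
      (EuclideanSpace ℝ (Fin D))).symm.toContinuousLinearEquiv.differentiableAt).comp z
      (hfd_diff z)
  have hs_fun : (fun z : EuclideanSpace ℝ (Fin D) => s z t) = fun z => (p z t)⁻¹ • G z := by
    funext z
    rw [hs]
    have hfd : HasFDerivAt (fun w : EuclideanSpace ℝ (Fin D) => Real.log (p w t))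
        ((p z t)⁻¹ • fderiv ℝ (fun w : EuclideanSpace ℝ (Fin D) => p w t) z) z :=
      (hq_diff z).hasFDerivAt.log (hp_pos z t htI).ne'
    rw [hfd.hasGradientAt.gradient, _root_.map_smul]
    rfl
  have htr_s : LinearMap.trace ℝ (EuclideanSpace ℝ (Fin D))
      (fderiv ℝ (fun z => s z t) y).toLinearMap
      = pt⁻¹ * Tr2 - (pt ^ 2)⁻¹ * ‖G y‖ ^ 2 := by
    have hc' : HasFDerivAt (fun z : EuclideanSpace ℝ (Fin D) => (p z t)⁻¹)
        (-(p y t ^ 2)⁻¹ • fderiv ℝ (fun z : EuclideanSpace ℝ (Fin D) => p z t) y) y :=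
      (hasDerivAt_inv (hp_pos y t htI).ne').comp_hasFDerivAt y (hq_diff y).hasFDerivAt
    have hsmul : HasFDerivAt (fun z : EuclideanSpace ℝ (Fin D) => (p z t)⁻¹ • G z)
        ((p y t)⁻¹ • fderiv ℝ G y +
          (-(p y t ^ 2)⁻¹ •
            fderiv ℝ (fun z : EuclideanSpace ℝ (Fin D) => p z t) y).smulRight (G y)) y :=
      hc'.smul (hG_diff y).hasFDerivAt
    have hGyn : fderiv ℝ (fun z : EuclideanSpace ℝ (Fin D) => p z t) y (G y) = ‖G y‖ ^ 2 := by
      rw [← hGpair, real_inner_self_eq_norm_sq]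
    rw [hs_fun, hsmul.fderiv]
    simp only [ContinuousLinearMap.coe_add, ContinuousLinearMap.coe_smul, map_add,
      _root_.map_smul, trace_smulRight_aux, smul_eq_mul, ContinuousLinearMap.smul_apply, hGyn]
    rw [← hptdef, ← hTr2]
    ring
  have hsn : ‖s y t‖ ^ 2 = (pt ^ 2)⁻¹ * ‖G y‖ ^ 2 := by
    have : s y t = pt⁻¹ • G y := by
      have := congrFun hs_fun y
      simpa [hptdef] using this
    rw [this, norm_smul]
    rw [Real.norm_eq_abs, abs_of_pos (inv_pos.2 hpt)]
    field_simp
  -- final assembly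
  rw [hLHS, htr_s, hsn]
  have hFeval : F t = ψ t ^ D * pt := rfl
  rw [hKdef, hPv1, hP01, hm2, hFeval]
  have hψpow : ψ t ^ (D - 1) * ψ t = ψ t ^ D := by
    conv_rhs => rw [show D = D - 1 + 1 from (Nat.succ_pred_eq_of_pos hD).symm]
    rw [pow_succ]
  have hψD : (0:ℝ) < ψ t ^ D := pow_pos hψt D
  rw [hψ' t htI]
  field_simp
  linear_combination (↑D * b t * pt * 2 * (2 * σ t ^ 2) * (pt * pt ^ 2 * pt ^ 2)
    + (pt ^ 2 * ↑D * b t * 2 - pt ^ 6 * ↑D * b t * σ t ^ 2 * 4)) * hψpow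
end
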